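/- arXiv:0907.0558 — 5 statements merged into one kernel-verified Lean document; each statement's English description precedes it below -/
import Mathlib

section
/- Let Q₁, …, Q_ℓ ∈ ℝ^N be pairwise distinct, assume a_{ij} ≥ 0 for all i ≠ j, and assume a_{i₀j₀} > 0 for some i₀ ≠ j₀. Then the system of criticality equations Σ_{j≠i} a_{ij}·(Q_i − Q_j)/|Q_i − Q_j| = 0 for all i = 1, …, ℓ cannot hold; indeed, multiplying the i-th equation by Q_i and summing yields Σ_{i<j} a_{ij}|Q_i − Q_j| ≥ a_{i₀j₀} > 0. -/
/-!
Pair the `i`-th equation with `Q i` and sum over `i`. Since `a` is symmetric, swapping `i` and `j`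
turns `∑ i j, a i j / ‖Q i - Q j‖ * ⟪Q i - Q j, Q i⟫` into half of `∑ i j, a i j * ‖Q i - Q j‖`.
For a critical configuration this sum vanishes, yet all its terms are nonnegative and the
`(i₀, j₀)` term is positive.
-/

open Finset
open scoped InnerProductSpace

section Criticality

variable {ι E : Type*} [Fintype ι] [NormedAddCommGroup E]

theorem two_mul_sum_sum_mul_inner_sub_self [InnerProductSpace ℝ E] (c : ι → ι → ℝ)
    (hc : ∀ i j, c i j = c j i) (Q : ι → E) :
    2 * ∑ i, ∑ j, c i j * ⟪Q i - Q j, Q i⟫_ℝ = ∑ i, ∑ j, c i j * ‖Q i - Q j‖ ^ 2 := by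
  have hswap : ∑ i, ∑ j, c i j * ⟪Q i - Q j, Q i⟫_ℝ =
      ∑ i, ∑ j, c i j * ⟪Q i - Q j, -Q j⟫_ℝ := by
    rw [sum_comm]
    refine sum_congr rfl fun i _ => sum_congr rfl fun j _ => ?_
    rw [hc, ← inner_neg_neg, neg_sub]
  rw [two_mul]
  nth_rw 2 [hswap]
  rw [← sum_add_distrib]
  refine sum_congr rfl fun i _ => ?_
  rw [← sum_add_distrib]
  refine sum_congr rfl fun j _ => ?_
  rw [← mul_add, ← inner_add_right, ← sub_eq_add_neg, real_inner_self_eq_norm_sq]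

noncomputable def force [DecidableEq ι] [NormedSpace ℝ E] (a : ι → ι → ℝ) (Q : ι → E) (i : ι) :
    E :=
  ∑ j ∈ univ.erase i, (a i j / ‖Q i - Q j‖) • (Q i - Q j)

theorem inner_force_self [DecidableEq ι] [InnerProductSpace ℝ E] (a : ι → ι → ℝ) (Q : ι → E)
    (i : ι) :
    ⟪force a Q i, Q i⟫_ℝ = ∑ j, a i j / ‖Q i - Q j‖ * ⟪Q i - Q j, Q i⟫_ℝ := by
  rw [force, sum_inner, sum_erase _ (by simp)]
  simp only [real_inner_smul_left]

theorem two_mul_sum_inner_force_self [DecidableEq ι] [InnerProductSpace ℝ E]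
    (a : ι → ι → ℝ) (hsym : ∀ i j, a i j = a j i) (Q : ι → E) :
    2 * ∑ i, ⟪force a Q i, Q i⟫_ℝ = ∑ i, ∑ j, a i j * ‖Q i - Q j‖ := by
  simp only [inner_force_self]
  rw [two_mul_sum_sum_mul_inner_sub_self _ (fun i j => by rw [hsym, norm_sub_rev])]
  refine sum_congr rfl fun i _ => sum_congr rfl fun j _ => ?_
  -- when `Q i = Q j` both sides vanish, the left one because `a i j / 0 = 0` in Lean
  rcases eq_or_ne ‖Q i - Q j‖ 0 with h | h
  · simp [h]
  · field_simp

theorem sum_sum_mul_norm_sub_pos (a : ι → ι → ℝ) (hnonneg : ∀ i j, i ≠ j → 0 ≤ a i j)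
    (Q : ι → E) {i₀ j₀ : ι} (hQ : Q i₀ ≠ Q j₀) (ha : 0 < a i₀ j₀) :
    0 < ∑ i, ∑ j, a i j * ‖Q i - Q j‖ := by
  have hterm : ∀ i j, 0 ≤ a i j * ‖Q i - Q j‖ := fun i j => by
    rcases eq_or_ne i j with rfl | h
    · simp
    · exact mul_nonneg (hnonneg i j h) (norm_nonneg _)
  refine sum_pos' (fun i _ => sum_nonneg fun j _ => hterm i j) ⟨i₀, mem_univ _, ?_⟩
  refine sum_pos' (fun j _ => hterm i₀ j) ⟨j₀, mem_univ _, ?_⟩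
  exact mul_pos ha (norm_pos_iff.mpr (sub_ne_zero.mpr hQ))

theorem not_forall_force_eq_zero [DecidableEq ι] [InnerProductSpace ℝ E]
    (a : ι → ι → ℝ) (hsym : ∀ i j, a i j = a j i)
    (hnonneg : ∀ i j, i ≠ j → 0 ≤ a i j) (Q : ι → E) {i₀ j₀ : ι} (hQ : Q i₀ ≠ Q j₀)
    (ha : 0 < a i₀ j₀) : ¬ ∀ i, force a Q i = 0 := by
  intro hcrit
  have henergy := two_mul_sum_inner_force_self a hsym Q
  simp only [hcrit, inner_zero_left, sum_const_zero, mul_zero] at henergy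
  exact (sum_sum_mul_norm_sub_pos a hnonneg Q hQ ha).ne henergy

end Criticality

theorem no_critical_config_nonneg_coeffs_general
    (ℓ N : ℕ)
    (a : Fin ℓ → Fin ℓ → ℝ) (hsym : ∀ i j, a i j = a j i)
    (Q : Fin ℓ → EuclideanSpace ℝ (Fin N))
    (hdist : ∀ i j, i ≠ j → Q i ≠ Q j)
    (hnonneg : ∀ i j, i ≠ j → 0 ≤ a i j)
    (i₀ j₀ : Fin ℓ) (hij : i₀ ≠ j₀) (ha : 0 < a i₀ j₀) :
    ¬ (∀ i, ∑ j ∈ Finset.univ.erase i,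
        (a i j / ‖Q i - Q j‖) • (Q i - Q j) = (0 : EuclideanSpace ℝ (Fin N))) ∧
    ((∀ i, ∑ j ∈ Finset.univ.erase i,
        (a i j / ‖Q i - Q j‖) • (Q i - Q j) = (0 : EuclideanSpace ℝ (Fin N))) →
      a i₀ j₀ ≤ ∑ i, ∑ j ∈ Finset.univ.filter (fun j => i < j), a i j * ‖Q i - Q j‖) := by
  have hnot_critical : ¬ ∀ i, force a Q i = 0 :=
    not_forall_force_eq_zero a hsym hnonneg Q (hdist i₀ j₀ hij) ha
  exact ⟨hnot_critical, fun hcrit => absurd hcrit hnot_critical⟩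

theorem no_critical_config_nonneg_coeffs
    (ℓ N : ℕ) (hℓ : 2 ≤ ℓ) (hN : 1 ≤ N)
    (a : Fin ℓ → Fin ℓ → ℝ) (hsym : ∀ i j, a i j = a j i)
    (Q : Fin ℓ → EuclideanSpace ℝ (Fin N))
    (hdist : ∀ i j, i ≠ j → Q i ≠ Q j)
    (hnonneg : ∀ i j, i ≠ j → 0 ≤ a i j)
    (i₀ j₀ : Fin ℓ) (hij : i₀ ≠ j₀) (ha : 0 < a i₀ j₀) :
    ¬ (∀ i, ∑ j ∈ Finset.univ.erase i,
        (a i j / ‖Q i - Q j‖) • (Q i - Q j) = (0 : EuclideanSpace ℝ (Fin N))) ∧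
    ((∀ i, ∑ j ∈ Finset.univ.erase i,
        (a i j / ‖Q i - Q j‖) • (Q i - Q j) = (0 : EuclideanSpace ℝ (Fin N))) →
      a i₀ j₀ ≤ ∑ i, ∑ j ∈ Finset.univ.filter (fun j => i < j), a i j * ‖Q i - Q j‖) :=
  no_critical_config_nonneg_coeffs_general ℓ N a hsym Q hdist hnonneg i₀ j₀ hij ha
end

section
/- There exists a constant C > 0 such that for all z, ξ ∈ ℝ^N with |ξ| ≥ 1: w(z + ξ) ≤ C·w(ξ)·(1 + |z|)^{(N−1)/2}·e^{|z|}. -/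
/-!
With `a = (N - 1)/2` and `φ r = r ^ a * exp r`, the asymptotics say that `φ r * W r` stays
between two positive constants for `r ≥ 1`; replacing `φ r` by `φ (max r 1)` extends this to all
`r ≥ 0`. Since `φ` is increasing and `‖ξ‖ ≤ max ‖z + ξ‖ 1 * (1 + ‖z‖)`, one has
`φ ‖ξ‖ ≤ φ (max ‖z + ξ‖ 1) * (1 + ‖z‖) ^ a * exp ‖z‖`, and dividing the two-sided bound at
`‖z + ξ‖` by the one at `‖ξ‖` gives the estimate.
-/

open Filter Set Real Topology

lemma ContinuousOn.bddAbove_image_Ici_of_tendsto {f : ℝ → ℝ} {b A : ℝ}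
    (hf : ContinuousOn f (Ici b)) (hlim : Tendsto f atTop (𝓝 A)) : BddAbove (f '' Ici b) := by
  obtain ⟨T, hT⟩ := eventually_atTop.1 (hlim.eventually (gt_mem_nhds (lt_add_one A)))
  have hsplit : Ici b ⊆ Icc b T ∪ Ici T := fun t ht => by
    rcases le_total t T with h | h
    exacts [Or.inl ⟨ht, h⟩, Or.inr h]
  have hcompact : BddAbove (f '' Icc b T) :=
    isCompact_Icc.bddAbove_image (hf.mono Icc_subset_Ici_self)
  have htail : BddAbove (f '' Ici T) := ⟨A + 1, by rintro _ ⟨t, ht, rfl⟩; exact (hT t ht).le⟩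
  exact (hcompact.union htail).mono ((image_mono hsplit).trans (image_union _ _ _).le)

lemma ContinuousOn.exists_pos_le_of_tendsto {f : ℝ → ℝ} {b A : ℝ}
    (hf : ContinuousOn f (Ici b)) (hpos : ∀ t ∈ Ici b, 0 < f t) (hA : 0 < A)
    (hlim : Tendsto f atTop (𝓝 A)) : ∃ c > 0, ∀ t ∈ Ici b, c ≤ f t := by
  have hinv : ContinuousOn f⁻¹ (Ici b) := hf.inv₀ fun t ht => (hpos t ht).ne'
  obtain ⟨K, hK⟩ := hinv.bddAbove_image_Ici_of_tendsto (hlim.inv₀ hA.ne')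
  have hbound : ∀ t ∈ Ici b, (f t)⁻¹ ≤ K := fun t ht => hK ⟨t, ht, rfl⟩
  have hKpos : 0 < K := (inv_pos.2 (hpos b self_mem_Ici)).trans_le (hbound b self_mem_Ici)
  exact ⟨K⁻¹, inv_pos.2 hKpos, fun t ht => inv_le_of_inv_le₀ (hpos t ht) (hbound t ht)⟩

lemma rpow_mul_exp_le_of_le_add {a s t u : ℝ} (ha : 0 ≤ a) (ht : 0 ≤ t) (hs : 1 ≤ s)
    (hu : 0 ≤ u) (htsu : t ≤ s + u) :
    t ^ a * exp t ≤ s ^ a * exp s * ((1 + u) ^ a * exp u) := by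
  have hts : t ≤ s * (1 + u) := by nlinarith
  calc t ^ a * exp t ≤ (s * (1 + u)) ^ a * exp (s + u) := by gcongr
    _ = s ^ a * exp s * ((1 + u) ^ a * exp u) := by
      rw [mul_rpow (by linarith) (by linarith), exp_add]
      ring

section Profile

variable {W : ℝ → ℝ} {a A : ℝ}

lemma exists_bounds_rpow_max_one_mul_exp_mul (ha : 0 ≤ a) (hW_cont : ContinuousOn W (Ici 0))
    (hW_pos : ∀ r ∈ Ici (0 : ℝ), 0 < W r) (hA : 0 < A)
    (hW_asym : Tendsto (fun r => r ^ a * exp r * W r) atTop (𝓝 A)) :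
    ∃ c > 0, ∃ K, ∀ s ∈ Ici (0 : ℝ),
      c ≤ max s 1 ^ a * exp (max s 1) * W s ∧ max s 1 ^ a * exp (max s 1) * W s ≤ K := by
  set g : ℝ → ℝ := fun s => max s 1 ^ a * exp (max s 1) * W s
  have hg_cont : ContinuousOn g (Ici 0) := by
    have hmax : Continuous fun s : ℝ => max s 1 := by fun_prop
    exact (((continuous_rpow_const ha).comp hmax).mul (continuous_exp.comp hmax)).continuousOn.mul
      hW_cont
  have hg_pos : ∀ s ∈ Ici (0 : ℝ), 0 < g s := fun s hs =>
    mul_pos (mul_pos (rpow_pos_of_pos (by positivity) a) (exp_pos _)) (hW_pos s hs)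
  have hg_lim : Tendsto g atTop (𝓝 A) := by
    refine hW_asym.congr' ?_
    filter_upwards [eventually_ge_atTop 1] with s hs
    simp only [g, max_eq_left hs]
  obtain ⟨c, hc, hcg⟩ := hg_cont.exists_pos_le_of_tendsto hg_pos hA hg_lim
  obtain ⟨K, hK⟩ := hg_cont.bddAbove_image_Ici_of_tendsto hg_lim
  exact ⟨c, hc, K, fun s hs => ⟨hcg s hs, hK ⟨s, hs, rfl⟩⟩⟩

lemma exists_le_mul_rpow_mul_exp_of_le_add (ha : 0 ≤ a) (hW_cont : ContinuousOn W (Ici 0))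
    (hW_pos : ∀ r ∈ Ici (0 : ℝ), 0 < W r) (hA : 0 < A)
    (hW_asym : Tendsto (fun r => r ^ a * exp r * W r) atTop (𝓝 A)) :
    ∃ C > 0, ∀ s t u : ℝ, 0 ≤ s → 1 ≤ t → 0 ≤ u → t ≤ s + u →
      W s ≤ C * W t * (1 + u) ^ a * exp u := by
  obtain ⟨c, hc, K, hbounds⟩ :=
    exists_bounds_rpow_max_one_mul_exp_mul ha hW_cont hW_pos hA hW_asym
  have hK : 0 < K := hc.trans_le ((hbounds 0 self_mem_Ici).1.trans (hbounds 0 self_mem_Ici).2)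
  refine ⟨K / c, div_pos hK hc, fun s t u hs ht hu htsu => ?_⟩
  have ht₀ : t ∈ Ici (0 : ℝ) := mem_Ici.2 (zero_le_one.trans ht)
  set σ := max s 1
  have hσ : 0 < σ ^ a * exp σ := mul_pos (rpow_pos_of_pos (by positivity) a) (exp_pos _)
  have hlower : c ≤ t ^ a * exp t * W t := by
    simpa only [max_eq_left ht] using (hbounds t ht₀).1
  have hweight : t ^ a * exp t ≤ σ ^ a * exp σ * ((1 + u) ^ a * exp u) :=
    rpow_mul_exp_le_of_le_add ha ht₀ (le_max_right s 1) hu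
      (htsu.trans (by gcongr; exact le_max_left s 1))
  rw [← mul_le_mul_iff_of_pos_left hσ]
  calc σ ^ a * exp σ * W s ≤ K := (hbounds s hs).2
    _ = K / c * c := (div_mul_cancel₀ K hc.ne').symm
    _ ≤ K / c * (t ^ a * exp t * W t) := by gcongr
    _ ≤ K / c * (σ ^ a * exp σ * ((1 + u) ^ a * exp u) * W t) := by
      gcongr
      exact (hW_pos t ht₀).le
    _ = σ ^ a * exp σ * (K / c * W t * (1 + u) ^ a * exp u) := by ring

end Profile

theorem bump_ratio_bound
    (N : ℕ) (hN : 2 ≤ N)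
    (W : ℝ → ℝ) (hW_cont : ContinuousOn W (Ici 0))
    (hW_pos : ∀ r ∈ Ici (0 : ℝ), 0 < W r)
    (A : ℝ) (hA : 0 < A)
    (hW_asym : Tendsto (fun r => r ^ (((N : ℝ) - 1) / 2) * Real.exp r * W r)
      atTop (nhds A))
    (w : EuclideanSpace ℝ (Fin N) → ℝ) (hw : ∀ x, w x = W ‖x‖) :
    ∃ C > (0 : ℝ), ∀ z ξ : EuclideanSpace ℝ (Fin N), 1 ≤ ‖ξ‖ →
      w (z + ξ) ≤ C * W ‖ξ‖ * (1 + ‖z‖) ^ (((N : ℝ) - 1) / 2) * Real.exp ‖z‖ := by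
  have ha : 0 ≤ ((N : ℝ) - 1) / 2 := by
    have : (2 : ℝ) ≤ N := by exact_mod_cast hN
    linarith
  obtain ⟨C, hC, hle⟩ := exists_le_mul_rpow_mul_exp_of_le_add ha hW_cont hW_pos hA hW_asym
  refine ⟨C, hC, fun z ξ hξ => ?_⟩
  rw [hw]
  exact hle _ _ _ (norm_nonneg _) hξ (norm_nonneg _) (norm_le_add_norm_add' z ξ)
end

section
/- For every ρ ≥ 0 the integral ξ(ρ) := ∫_{ℝ^N} f(w(x))·w(x + ρe₁) dx is absolutely convergent, the integral c := ∫_{ℝ^N} f(w(x))·e^{−x₁} dx is absolutely convergent, and ξ(ρ)/W(ρ) → c as ρ → +∞ (here e₁ is the first standard basis vector and x₁ the first coordinate of x). -/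
/-!
Write `W r = g r · e^{-r} (1 + r)^{-q}` with `q = (N - 1)/2`. By continuity, positivity and the
asymptotics, `g` lies between two positive constants on `[0, ∞)` and tends to `A`. Hence
`w ≤ B e^{-|x|}`, so `|f ∘ w| ≤ C e^{-(1+σ)|x|}`, which gives both integrability claims. Since
`|x + ρe₁| = ρ + x₁ + O(1/ρ)`, the ratio `w(x + ρe₁)/W(ρ)` tends to `e^{-x₁}` pointwise and is
bounded by a multiple of `e^{|x|} (1 + |x|)^q`; the extra decay `e^{-σ|x|}` makes this dominated,
and the limit follows by dominated convergence.
-/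

open Filter Set Real MeasureTheory Topology Module
open scoped RealInnerProductSpace

theorem ContinuousOn.bddAbove_image_Ici_of_tendsto_s9 {g : ℝ → ℝ} {a L : ℝ}
    (hg : ContinuousOn g (Ici a)) (hL : Tendsto g atTop (𝓝 L)) : BddAbove (g '' Ici a) := by
  obtain ⟨R, hR⟩ := eventually_atTop.1 (hL.eventually_le_const (lt_add_one L))
  have hsplit : Ici a ⊆ Icc a R ∪ Ici R := fun r hr =>
    (le_total r R).elim (fun h => Or.inl ⟨hr, h⟩) Or.inr
  refine BddAbove.mono (image_mono hsplit) ?_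
  rw [image_union]
  exact (isCompact_Icc.bddAbove_image (hg.mono Icc_subset_Ici_self)).union
    ⟨L + 1, forall_mem_image.2 hR⟩

theorem exists_pos_bounds_of_tendsto {g : ℝ → ℝ} {a L : ℝ} (hg : ContinuousOn g (Ici a))
    (hpos : ∀ r ∈ Ici a, 0 < g r) (hL : Tendsto g atTop (𝓝 L)) (hL0 : L ≠ 0) :
    ∃ b B, 0 < b ∧ ∀ r ∈ Ici a, b ≤ g r ∧ g r ≤ B := by
  obtain ⟨B, hB⟩ := hg.bddAbove_image_Ici_of_tendsto_s9 hL
  obtain ⟨M, hM⟩ := (hg.inv₀ fun r hr => (hpos r hr).ne').bddAbove_image_Ici_of_tendsto_s9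
    (hL.inv₀ hL0)
  have hM0 : 0 < M := (inv_pos.2 (hpos a self_mem_Ici)).trans_le
    (hM (mem_image_of_mem _ self_mem_Ici))
  refine ⟨M⁻¹, B, inv_pos.2 hM0, fun r hr => ⟨?_, hB (mem_image_of_mem g hr)⟩⟩
  exact (inv_le_comm₀ (hpos r hr) hM0).1 (hM (mem_image_of_mem _ hr))

theorem exists_one_add_rpow_mul_exp_neg_le (p : ℝ) {a : ℝ} (ha : 0 < a) :
    ∃ K, ∀ r ∈ Ici (0 : ℝ), (1 + r) ^ p * exp (-a * r) ≤ K := by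
  have hcont : ContinuousOn (fun r : ℝ => (1 + r) ^ p * exp (-a * r)) (Ici 0) :=
    ((continuousOn_const.add continuousOn_id).rpow_const fun r hr =>
      Or.inl (show (1 : ℝ) + r ≠ 0 by simp only [mem_Ici] at hr; linarith)).mul (by fun_prop)
  have hlim : Tendsto (fun r : ℝ => (1 + r) ^ p * exp (-a * r)) atTop (𝓝 0) := by
    have h := ((tendsto_rpow_mul_exp_neg_mul_atTop_nhds_zero p a ha).comp
      (tendsto_atTop_add_const_left atTop 1 tendsto_id)).mul_const (exp a)
    rw [zero_mul] at h
    refine h.congr fun r => ?_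
    simp only [Function.comp_apply, id, mul_assoc, ← exp_add]
    ring_nf
  obtain ⟨K, hK⟩ := hcont.bddAbove_image_Ici_of_tendsto_s9 hlim
  exact ⟨K, fun r hr => hK (mem_image_of_mem _ hr)⟩

section Integrability

variable {E : Type*} [NormedAddCommGroup E] [NormedSpace ℝ E] [FiniteDimensional ℝ E]
  [MeasurableSpace E] [BorelSpace E] {μ : Measure E} [μ.IsAddHaarMeasure]

theorem integrable_one_add_norm_rpow_mul_exp_neg_mul_norm (p : ℝ) {a : ℝ} (ha : 0 < a) :
    Integrable (fun x : E => (1 + ‖x‖) ^ p * exp (-a * ‖x‖)) μ := by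
  set n : ℝ := finrank ℝ E + 1
  obtain ⟨K, hK⟩ := exists_one_add_rpow_mul_exp_neg_le (p + n) ha
  refine ((integrable_one_add_norm (μ := μ) (r := n) (by simp [n])).const_mul K).mono'
    (by fun_prop) (ae_of_all _ fun x => ?_)
  have hx : 0 < 1 + ‖x‖ := by positivity
  rw [Real.norm_of_nonneg (by positivity)]
  calc (1 + ‖x‖) ^ p * exp (-a * ‖x‖)
      = (1 + ‖x‖) ^ (p + n) * exp (-a * ‖x‖) * (1 + ‖x‖) ^ (-n) := by
        rw [rpow_add hx, rpow_neg hx.le]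
        field_simp
    _ ≤ K * (1 + ‖x‖) ^ (-n) := by
        gcongr
        exact hK _ (norm_nonneg x)

theorem integrable_exp_neg_mul_norm {a : ℝ} (ha : 0 < a) :
    Integrable (fun x : E => exp (-a * ‖x‖)) μ := by
  simpa using integrable_one_add_norm_rpow_mul_exp_neg_mul_norm (μ := μ) 0 ha

end Integrability

section Geometry

variable {E : Type*} [NormedAddCommGroup E] [InnerProductSpace ℝ E] {u : E}

theorem abs_norm_add_smul_sub_le (hu : ‖u‖ = 1) (v : E) {ρ : ℝ} (hρ : 0 ≤ ρ) :
    |‖v + ρ • u‖ - ρ| ≤ ‖v‖ := by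
  have h := abs_norm_sub_norm_le (v + ρ • u) (ρ • u)
  rwa [add_sub_cancel_right, norm_smul, hu, mul_one, Real.norm_of_nonneg hρ] at h

theorem abs_norm_add_smul_sub_sub_inner_le (hu : ‖u‖ = 1) (v : E) {ρ : ℝ} (hρ : 0 < ρ) :
    |‖v + ρ • u‖ - ρ - ⟪v, u⟫| ≤ ‖v‖ ^ 2 / (2 * ρ) := by
  set d := ‖v + ρ • u‖ - ρ
  have hd : d ^ 2 ≤ ‖v‖ ^ 2 :=
    sq_le_sq.2 ((abs_norm_add_smul_sub_le hu v hρ.le).trans (abs_norm v).ge)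
  have hsq : (d + ρ) ^ 2 = ‖v‖ ^ 2 + 2 * ρ * ⟪v, u⟫ + ρ ^ 2 := by
    rw [sub_add_cancel, norm_add_sq_real, inner_smul_right, norm_smul, hu,
      Real.norm_of_nonneg hρ.le]
    ring
  have hkey : d - ⟪v, u⟫ = (‖v‖ ^ 2 - d ^ 2) / (2 * ρ) := by
    field_simp
    linear_combination hsq
  rw [hkey, abs_div, abs_of_nonneg (sub_nonneg.2 hd), abs_of_pos (by positivity)]
  gcongr
  linarith [sq_nonneg d]

theorem tendsto_norm_add_smul_sub_atTop (hu : ‖u‖ = 1) (v : E) :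
    Tendsto (fun ρ : ℝ => ‖v + ρ • u‖ - ρ) atTop (𝓝 ⟪v, u⟫) := by
  rw [tendsto_iff_norm_sub_tendsto_zero]
  refine squeeze_zero' (Eventually.of_forall fun _ => norm_nonneg _) ?_
    ((tendsto_const_nhds (x := ‖v‖ ^ 2)).div_atTop (tendsto_id.const_mul_atTop two_pos))
  filter_upwards [eventually_gt_atTop 0] with ρ hρ
  exact abs_norm_add_smul_sub_sub_inner_le hu v hρ

end Geometry

section DecayRatio

/-- `W r` measured against the decay `e^{-r} r^{-q}`, with `1 + r` in place of `r` so that it stays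
bounded near `r = 0`. -/
noncomputable def decayRatio (q : ℝ) (W : ℝ → ℝ) (r : ℝ) : ℝ := (1 + r) ^ q * exp r * W r

variable {q : ℝ} {W : ℝ → ℝ}

theorem decayRatio_pos_iff {r : ℝ} (hr : 0 ≤ r) : 0 < decayRatio q W r ↔ 0 < W r := by
  have : 0 < (1 + r) ^ q * exp r := by positivity
  exact mul_pos_iff_of_pos_left this

theorem continuousOn_decayRatio (hW : ContinuousOn W (Ici 0)) :
    ContinuousOn (decayRatio q W) (Ici 0) :=
  (((continuousOn_const.add continuousOn_id).rpow_const fun r hr =>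
    Or.inl (show (1 : ℝ) + r ≠ 0 by simp only [mem_Ici] at hr; linarith)).mul
    (by fun_prop)).mul hW

theorem tendsto_decayRatio_of_tendsto {A : ℝ}
    (h : Tendsto (fun r => r ^ q * exp r * W r) atTop (𝓝 A)) :
    Tendsto (decayRatio q W) atTop (𝓝 A) := by
  have hbase : Tendsto (fun r : ℝ => r⁻¹ + 1) atTop (𝓝 1) := by
    simpa using tendsto_inv_atTop_zero.add_const (1 : ℝ)
  have hmul := (one_rpow q ▸ hbase.rpow_const (Or.inl one_ne_zero)).mul h
  rw [one_mul] at hmul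
  refine hmul.congr' ?_
  filter_upwards [eventually_gt_atTop 0] with r hr
  rw [decayRatio, ← mul_assoc, ← mul_assoc, ← mul_rpow (by positivity) hr.le, add_mul,
    inv_mul_cancel₀ hr.ne', one_mul, add_comm]

theorem exists_decayRatio_bounds {A : ℝ} (hW_cont : ContinuousOn W (Ici 0))
    (hW_pos : ∀ r ∈ Ici (0 : ℝ), 0 < W r) (hlim : Tendsto (decayRatio q W) atTop (𝓝 A))
    (hA : A ≠ 0) : ∃ b B, 0 < b ∧ ∀ r ∈ Ici 0, b ≤ decayRatio q W r ∧ decayRatio q W r ≤ B :=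
  exists_pos_bounds_of_tendsto (continuousOn_decayRatio hW_cont)
    (fun r hr => (decayRatio_pos_iff hr).2 (hW_pos r hr)) hlim hA

theorem le_mul_exp_neg_of_decayRatio_le {B r : ℝ} (hq : 0 ≤ q) (hr : 0 ≤ r) (hW : 0 ≤ W r)
    (h : decayRatio q W r ≤ B) : W r ≤ B * exp (-r) :=
  calc W r ≤ (1 + r) ^ q * W r := le_mul_of_one_le_left hW (one_le_rpow (by linarith) hq)
    _ = decayRatio q W r * exp (-r) := by
        rw [decayRatio, exp_neg]
        field_simp
    _ ≤ B * exp (-r) := by gcongr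

theorem div_eq_decayRatio_div_mul {r s : ℝ} (hr : 0 ≤ r) (hs : 0 ≤ s) (hWr : W r ≠ 0) :
    W s / W r = decayRatio q W s / decayRatio q W r * exp (r - s) * ((1 + r) / (1 + s)) ^ q := by
  have h1r : (1 + r) ^ q ≠ 0 := (rpow_pos_of_pos (by linarith) q).ne'
  have h1s : (1 + s) ^ q ≠ 0 := (rpow_pos_of_pos (by linarith) q).ne'
  rw [decayRatio, decayRatio, exp_sub, div_rpow (by linarith) (by linarith)]
  field_simp

theorem div_le_of_abs_sub_le {b B r s t : ℝ} (hq : 0 ≤ q) (hb : 0 < b)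
    (hbounds : ∀ r ∈ Ici 0, b ≤ decayRatio q W r ∧ decayRatio q W r ≤ B)
    (hr : 0 ≤ r) (hs : 0 ≤ s) (hrs : |s - r| ≤ t) :
    W s / W r ≤ B / b * exp t * (1 + t) ^ q := by
  obtain ⟨hbr, hrB⟩ := hbounds r hr
  obtain ⟨hbs, hsB⟩ := hbounds s hs
  have hWr : 0 < W r := (decayRatio_pos_iff hr).1 (hb.trans_le hbr)
  have hBb : 0 ≤ B / b := div_nonneg (hb.le.trans (hbr.trans hrB)) hb.le
  have hsr : decayRatio q W s / decayRatio q W r ≤ B / b :=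
    div_le_div₀ (hb.le.trans (hbs.trans hsB)) hsB hb hbr
  have hexp : exp (r - s) ≤ exp t := exp_le_exp.2 (by linarith [(abs_le.1 hrs).1])
  have hbase : (1 + r) / (1 + s) ≤ 1 + t := by
    have ht : 0 ≤ t := (abs_nonneg _).trans hrs
    rw [div_le_iff₀ (by linarith)]
    nlinarith [(abs_le.1 hrs).1]
  have hpow : ((1 + r) / (1 + s)) ^ q ≤ (1 + t) ^ q :=
    rpow_le_rpow (div_nonneg (by linarith) (by linarith)) hbase hq
  rw [div_eq_decayRatio_div_mul hr hs hWr.ne']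
  exact mul_le_mul (mul_le_mul hsr hexp (exp_pos _).le hBb) hpow (by positivity)
    (mul_nonneg hBb (exp_pos _).le)

theorem tendsto_comp_div_of_tendsto_sub {A c : ℝ} (hlim : Tendsto (decayRatio q W) atTop (𝓝 A))
    (hA : A ≠ 0) {s : ℝ → ℝ} (hs : Tendsto (fun ρ => s ρ - ρ) atTop (𝓝 c)) :
    Tendsto (fun ρ => W (s ρ) / W ρ) atTop (𝓝 (exp (-c))) := by
  have hs_top : Tendsto s atTop atTop := by
    simpa using hs.add_atTop tendsto_id
  have hratio : Tendsto (fun ρ => decayRatio q W (s ρ) / decayRatio q W ρ) atTop (𝓝 (A / A)) :=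
    (hlim.comp hs_top).div hlim hA
  rw [div_self hA] at hratio
  have hexp : Tendsto (fun ρ => exp (ρ - s ρ)) atTop (𝓝 (exp (-c))) := by
    refine ((continuous_exp.tendsto (-c)).comp hs.neg).congr fun ρ => ?_
    simp [neg_sub]
  have hbase : Tendsto (fun ρ => (1 + ρ) / (1 + s ρ)) atTop (𝓝 1) := by
    have h := ((hs.div_atTop (tendsto_atTop_add_const_left atTop 1 tendsto_id)).const_add 1).inv₀
      (by norm_num)
    simp only [add_zero, inv_one] at h
    refine h.congr' ?_
    filter_upwards [eventually_ge_atTop 0] with ρ hρ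
    rw [id, one_add_div (by linarith), inv_div]
    ring_nf
  have hmain := (hratio.mul hexp).mul (one_rpow q ▸ hbase.rpow_const (Or.inl one_ne_zero))
  rw [one_mul, mul_one] at hmain
  have hW_ne : ∀ᶠ ρ in atTop, W ρ ≠ 0 := by
    filter_upwards [hlim.eventually_ne hA] with ρ hρ h
    simp [decayRatio, h] at hρ
  refine hmain.congr' ?_
  filter_upwards [eventually_ge_atTop 0, hs_top.eventually_ge_atTop 0, hW_ne] with ρ hρ hsρ hWρ
  exact (div_eq_decayRatio_div_mul hρ hsρ hWρ).symm

end DecayRatio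

theorem abs_comp_le_mul_exp_neg {f W : ℝ → ℝ} {C₀ σ B r : ℝ} (hC₀ : 0 ≤ C₀) (hσ : 0 ≤ 1 + σ)
    (hf : ∀ t : ℝ, |t| ≤ sSup (W '' Ici 0) → |f t| ≤ C₀ * |t| ^ (1 + σ))
    (hW_nonneg : ∀ r ∈ Ici (0 : ℝ), 0 ≤ W r) (hWB : ∀ r ∈ Ici (0 : ℝ), W r ≤ B * exp (-r))
    (hr : 0 ≤ r) : |f (W r)| ≤ C₀ * B ^ (1 + σ) * exp (-(1 + σ) * r) := by
  have hB : 0 ≤ B := nonneg_of_mul_nonneg_left ((hW_nonneg r hr).trans (hWB r hr)) (exp_pos _)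
  have hbdd : BddAbove (W '' Ici 0) := ⟨B, forall_mem_image.2 fun s hs =>
    (hWB s hs).trans (mul_le_of_le_one_right hB (exp_le_one_iff.2 (neg_nonpos.2 hs)))⟩
  have hWr := hW_nonneg r hr
  have hsup : |W r| ≤ sSup (W '' Ici 0) := by
    rw [abs_of_nonneg hWr]
    exact le_csSup hbdd (mem_image_of_mem W hr)
  calc |f (W r)| ≤ C₀ * |W r| ^ (1 + σ) := hf _ hsup
    _ = C₀ * W r ^ (1 + σ) := by rw [abs_of_nonneg hWr]
    _ ≤ C₀ * (B * exp (-r)) ^ (1 + σ) := by gcongr; exact hWB r hr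
    _ = C₀ * B ^ (1 + σ) * exp (-(1 + σ) * r) := by
        rw [mul_rpow hB (exp_pos _).le, ← exp_mul]
        ring_nf

theorem ContinuousOn.continuous_comp_norm {E : Type*} [SeminormedAddCommGroup E] {W : ℝ → ℝ}
    (hW : ContinuousOn W (Ici 0)) : Continuous fun x : E => W ‖x‖ :=
  hW.comp_continuous continuous_norm fun x => norm_nonneg x

theorem integrable_mul_comp_norm_add {E : Type*} [SeminormedAddCommGroup E] [MeasurableSpace E]
    [OpensMeasurableSpace E] {μ : Measure E} {F : E → ℝ} {W : ℝ → ℝ} {B : ℝ} (hF : Integrable F μ)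
    (hW : ContinuousOn W (Ici 0)) (hWB : ∀ r ∈ Ici (0 : ℝ), |W r| ≤ B) (v : E) :
    Integrable (fun x => F x * W ‖x + v‖) μ :=
  hF.mul_bdd (hW.continuous_comp_norm.comp (continuous_add_const v)).aestronglyMeasurable
    (ae_of_all _ fun _ => hWB _ (norm_nonneg _))

section InteractionIntegral

variable {E : Type*} [NormedAddCommGroup E] [InnerProductSpace ℝ E]
  {W : ℝ → ℝ} {F : E → ℝ} {C σ : ℝ} {u : E}

theorem norm_mul_comp_norm_add_smul_div_le {q b B : ℝ} (hq : 0 ≤ q) (hb : 0 < b)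
    (hbounds : ∀ r ∈ Ici 0, b ≤ decayRatio q W r ∧ decayRatio q W r ≤ B)
    (hFC : ∀ x, |F x| ≤ C * exp (-(1 + σ) * ‖x‖)) (hu : ‖u‖ = 1) (x : E) {ρ : ℝ}
    (hρ : 0 ≤ ρ) :
    ‖F x * W ‖x + ρ • u‖ / W ρ‖ ≤ C * (B / b) * ((1 + ‖x‖) ^ q * exp (-σ * ‖x‖)) := by
  have hW_pos : ∀ r ∈ Ici (0 : ℝ), 0 < W r := fun r hr =>
    (decayRatio_pos_iff hr).1 (hb.trans_le (hbounds r hr).1)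
  have hratio_pos : 0 < W ‖x + ρ • u‖ / W ρ := div_pos (hW_pos _ (norm_nonneg _)) (hW_pos ρ hρ)
  have hratio : W ‖x + ρ • u‖ / W ρ ≤ B / b * exp ‖x‖ * (1 + ‖x‖) ^ q :=
    div_le_of_abs_sub_le hq hb hbounds hρ (norm_nonneg _) (abs_norm_add_smul_sub_le hu x hρ)
  rw [Real.norm_eq_abs, mul_div_assoc, abs_mul, abs_of_pos hratio_pos]
  calc |F x| * (W ‖x + ρ • u‖ / W ρ)
      ≤ C * exp (-(1 + σ) * ‖x‖) * (B / b * exp ‖x‖ * (1 + ‖x‖) ^ q) :=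
        mul_le_mul (hFC x) hratio hratio_pos.le ((abs_nonneg _).trans (hFC x))
    _ = C * (B / b) * (1 + ‖x‖) ^ q * (exp (-(1 + σ) * ‖x‖) * exp ‖x‖) := by ring
    _ = C * (B / b) * ((1 + ‖x‖) ^ q * exp (-σ * ‖x‖)) := by
        rw [← exp_add]
        ring_nf

variable [FiniteDimensional ℝ E] [MeasurableSpace E] [BorelSpace E] {μ : Measure E}
  [μ.IsAddHaarMeasure]

theorem integrable_of_abs_le_mul_exp_neg (hF : AEStronglyMeasurable F μ) {a : ℝ} (ha : 0 < a)
    (hFC : ∀ x, |F x| ≤ C * exp (-a * ‖x‖)) : Integrable F μ :=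
  ((integrable_exp_neg_mul_norm ha).const_mul C).mono' hF (ae_of_all _ hFC)

theorem integrable_mul_exp_neg_inner (hF : AEStronglyMeasurable F μ) (hσ : 0 < σ)
    (hFC : ∀ x, |F x| ≤ C * exp (-(1 + σ) * ‖x‖)) (hu : ‖u‖ = 1) :
    Integrable (fun x => F x * exp (-⟪x, u⟫)) μ := by
  refine ((integrable_exp_neg_mul_norm hσ).const_mul C).mono'
    (hF.mul (by fun_prop : Continuous fun x : E => exp (-⟪x, u⟫)).aestronglyMeasurable)
    (ae_of_all _ fun x => ?_)
  have hinner : -⟪x, u⟫ ≤ ‖x‖ :=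
    (neg_le_abs _).trans (by simpa [hu] using abs_real_inner_le_norm x u)
  rw [Real.norm_eq_abs, abs_mul, abs_of_pos (exp_pos _)]
  calc |F x| * exp (-⟪x, u⟫) ≤ C * exp (-(1 + σ) * ‖x‖) * exp ‖x‖ :=
        mul_le_mul (hFC x) (exp_le_exp.2 hinner) (exp_pos _).le ((abs_nonneg _).trans (hFC x))
    _ = C * exp (-σ * ‖x‖) := by
        rw [mul_assoc, ← exp_add]
        ring_nf

theorem tendsto_integral_mul_comp_norm_add_smul_div {q A : ℝ} (hW_cont : ContinuousOn W (Ici 0))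
    (hW_pos : ∀ r ∈ Ici (0 : ℝ), 0 < W r) (hq : 0 ≤ q)
    (hlim : Tendsto (decayRatio q W) atTop (𝓝 A)) (hA : A ≠ 0)
    (hF : AEStronglyMeasurable F μ) (hσ : 0 < σ)
    (hFC : ∀ x, |F x| ≤ C * exp (-(1 + σ) * ‖x‖)) (hu : ‖u‖ = 1) :
    Tendsto (fun ρ : ℝ => (∫ x, F x * W ‖x + ρ • u‖ ∂μ) / W ρ) atTop
      (𝓝 (∫ x, F x * exp (-⟪x, u⟫) ∂μ)) := by
  obtain ⟨b, B, hb, hbounds⟩ := exists_decayRatio_bounds hW_cont hW_pos hlim hA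
  have hmeas : ∀ ρ : ℝ, AEStronglyMeasurable (fun x => F x * W ‖x + ρ • u‖ / W ρ) μ := fun ρ =>
    (hF.mul (hW_cont.continuous_comp_norm.comp
      (continuous_add_const (ρ • u))).aestronglyMeasurable).div₀ aestronglyMeasurable_const
  have hdom : ∀ᶠ ρ : ℝ in atTop, ∀ᵐ x ∂μ,
      ‖F x * W ‖x + ρ • u‖ / W ρ‖ ≤ C * (B / b) * ((1 + ‖x‖) ^ q * exp (-σ * ‖x‖)) := by
    filter_upwards [eventually_ge_atTop 0] with ρ hρ
    exact ae_of_all _ fun x => norm_mul_comp_norm_add_smul_div_le hq hb hbounds hFC hu x hρ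
  have hpointwise : ∀ x, Tendsto (fun ρ : ℝ => F x * W ‖x + ρ • u‖ / W ρ) atTop
      (𝓝 (F x * exp (-⟪x, u⟫))) := fun x => by
    simpa only [mul_div_assoc] using
      (tendsto_comp_div_of_tendsto_sub hlim hA (tendsto_norm_add_smul_sub_atTop hu x)).const_mul
        (F x)
  simpa only [integral_div] using tendsto_integral_filter_of_dominated_convergence _
    (Eventually.of_forall hmeas) hdom
    ((integrable_one_add_norm_rpow_mul_exp_neg_mul_norm q hσ).const_mul _)
    (ae_of_all _ hpointwise)

end InteractionIntegral

theorem interaction_integral_limit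
    (N : ℕ) (hN : 2 ≤ N)
    (W : ℝ → ℝ) (hW_cont : ContinuousOn W (Ici 0))
    (hW_pos : ∀ r ∈ Ici (0 : ℝ), 0 < W r)
    (A : ℝ) (hA : 0 < A)
    (hW_asym : Tendsto (fun r => r ^ (((N : ℝ) - 1) / 2) * Real.exp r * W r)
      atTop (nhds A))
    (w : EuclideanSpace ℝ (Fin N) → ℝ) (hw : ∀ x, w x = W ‖x‖)
    (f : ℝ → ℝ) (hf_cont : Continuous f)
    (C₀ σ : ℝ) (hC₀ : 0 < C₀) (hσ : 0 < σ)
    (hf_bound : ∀ t : ℝ, |t| ≤ sSup (W '' Ici 0) → |f t| ≤ C₀ * |t| ^ (1 + σ)) :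
    (∀ ρ : ℝ, 0 ≤ ρ → Integrable (fun x : EuclideanSpace ℝ (Fin N) =>
      f (w x) * w (x + ρ • EuclideanSpace.single (⟨0, by omega⟩ : Fin N) 1))) ∧
    Integrable (fun x : EuclideanSpace ℝ (Fin N) =>
      f (w x) * Real.exp (-(x ⟨0, by omega⟩))) ∧
    Tendsto (fun ρ : ℝ =>
        (∫ x : EuclideanSpace ℝ (Fin N),
          f (w x) * w (x + ρ • EuclideanSpace.single (⟨0, by omega⟩ : Fin N) 1)) / W ρ)
      atTop
      (nhds (∫ x : EuclideanSpace ℝ (Fin N),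
        f (w x) * Real.exp (-(x ⟨0, by omega⟩)))) := by
  obtain rfl : w = fun x => W ‖x‖ := funext hw
  have hq : 0 ≤ ((N : ℝ) - 1) / 2 := by
    have : (2 : ℝ) ≤ N := by exact_mod_cast hN
    linarith
  have hlim := tendsto_decayRatio_of_tendsto hW_asym
  obtain ⟨b, B, hb, hbounds⟩ := exists_decayRatio_bounds hW_cont hW_pos hlim hA.ne'
  have hWB : ∀ r ∈ Ici (0 : ℝ), W r ≤ B * exp (-r) := fun r hr =>
    le_mul_exp_neg_of_decayRatio_le hq hr (hW_pos r hr).le (hbounds r hr).2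
  have hW_abs : ∀ r ∈ Ici (0 : ℝ), |W r| ≤ B := fun r hr => by
    have hB : 0 ≤ B := hb.le.trans ((hbounds r hr).1.trans (hbounds r hr).2)
    rw [abs_of_pos (hW_pos r hr)]
    exact (hWB r hr).trans (mul_le_of_le_one_right hB (exp_le_one_iff.2 (neg_nonpos.2 hr)))
  have hFC : ∀ x : EuclideanSpace ℝ (Fin N),
      |f (W ‖x‖)| ≤ C₀ * B ^ (1 + σ) * exp (-(1 + σ) * ‖x‖) := fun x =>
    abs_comp_le_mul_exp_neg hC₀.le (by linarith) hf_bound (fun r hr => (hW_pos r hr).le) hWB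
      (norm_nonneg x)
  have hF : AEStronglyMeasurable (fun x : EuclideanSpace ℝ (Fin N) => f (W ‖x‖)) volume :=
    (hf_cont.comp hW_cont.continuous_comp_norm).aestronglyMeasurable
  have hu : ‖EuclideanSpace.single (⟨0, by omega⟩ : Fin N) (1 : ℝ)‖ = 1 := by simp
  have hinner : ∀ x : EuclideanSpace ℝ (Fin N),
      ⟪x, EuclideanSpace.single ⟨0, by omega⟩ 1⟫ = x ⟨0, by omega⟩ := fun x => by
    simp [EuclideanSpace.inner_single_right]
  simp only [← hinner]
  exact ⟨fun ρ _ => integrable_mul_comp_norm_add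
      (integrable_of_abs_le_mul_exp_neg hF (by linarith) hFC) hW_cont hW_abs _,
    integrable_mul_exp_neg_inner hF hσ hFC hu,
    tendsto_integral_mul_comp_norm_add_smul_div hW_cont hW_pos hq hlim hA.ne' hF hσ hFC hu⟩
end

section
/- The following hold: (1) for every i = 2, …, 6, r_i = min_{j<i} |P_i − P_j| = min{|P_i − P_j| : j < i, τ_j = −τ_i}; (2) |P_i − P_j| ≥ √2·min_{2≤s≤6} r_s whenever i ≠ j and τ_i·τ_j = 1. -/
/-!
All six points lie in the plane `a + span {v, u}`, and since `v, u` are orthonormal the distance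
between two of them is the Euclidean distance of their coordinates in the frame `(v, u)`.
Points `1, …, 4` lie on the `v`-axis at abscissae `0, r₂, r₂ + r₃, r₂ + r₃ + r₄` and points
`5, 6` on the `u`-axis at ordinates `r₅, -r₆`. Each new point therefore is at distance at least
`rᵢ` from all earlier ones (already one coordinate differs by that much), with equality at its
neighbour of opposite sign; and two points of equal sign are either separated by two consecutive
gaps on one axis, or lie on different axes, so their squared distance is at least `2 (min rₛ)²`.
-/

open Finset

section Frame

variable {E : Type*} [NormedAddCommGroup E] [InnerProductSpace ℝ E]

theorem norm_smul_add_smul_of_orthonormal {v u : E} (hv : ‖v‖ = 1) (hu : ‖u‖ = 1)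
    (hvu : inner ℝ v u = 0) (c d : ℝ) : ‖c • v + d • u‖ = √(c ^ 2 + d ^ 2) := by
  have horth : inner ℝ (c • v) (d • u) = 0 := by
    rw [real_inner_smul_left, real_inner_smul_right, hvu, mul_zero, mul_zero]
  rw [← Real.sqrt_mul_self (norm_nonneg _), norm_add_sq_eq_norm_sq_add_norm_sq_real horth,
    norm_smul, norm_smul, hv, hu, Real.norm_eq_abs, Real.norm_eq_abs, mul_one, mul_one,
    abs_mul_abs_self, abs_mul_abs_self, sq, sq]

theorem norm_sub_of_orthonormal_frame (a : E) {v u : E} (hv : ‖v‖ = 1) (hu : ‖u‖ = 1)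
    (hvu : inner ℝ v u = 0) (x y x' y' : ℝ) :
    ‖(a + x • v + y • u) - (a + x' • v + y' • u)‖ = √((x - x') ^ 2 + (y - y') ^ 2) := by
  rw [← norm_smul_add_smul_of_orthonormal hv hu hvu]
  congr 1
  module

end Frame

namespace CrossConfig

def coord (r : ℕ → ℝ) : ℕ → ℝ × ℝ
  | 2 => (r 2, 0)
  | 3 => (r 2 + r 3, 0)
  | 4 => (r 2 + r 3 + r 4, 0)
  | 5 => (0, r 5)
  | 6 => (0, -r 6)
  | _ => (0, 0)

def sign : ℕ → ℝ
  | 1 => -1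
  | 3 => -1
  | _ => 1

def sqDist (r : ℕ → ℝ) (i j : ℕ) : ℝ :=
  ((coord r i).1 - (coord r j).1) ^ 2 + ((coord r i).2 - (coord r j).2) ^ 2

variable {r : ℕ → ℝ}

theorem sq_le_sqDist (hr : ∀ m, 2 ≤ m → m ≤ 6 → 0 < r m) {i j : ℕ} (hi2 : 2 ≤ i) (hi6 : i ≤ 6)
    (hj1 : 1 ≤ j) (hji : j < i) : r i ^ 2 ≤ sqDist r i j := by
  have := hr 2 le_rfl (by norm_num)
  have := hr 3 (by norm_num) (by norm_num)
  have := hr 4 (by norm_num) (by norm_num)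
  have := hr 5 (by norm_num) (by norm_num)
  have := hr 6 (by norm_num) le_rfl
  interval_cases i <;> interval_cases j <;> simp only [sqDist, coord] <;> nlinarith

theorem exists_opposite_sign_sqDist_eq (i : ℕ) (hi2 : 2 ≤ i) (hi6 : i ≤ 6) :
    ∃ j, 1 ≤ j ∧ j < i ∧ sign j = -sign i ∧ sqDist r i j = r i ^ 2 := by
  interval_cases i
  · exact ⟨1, le_rfl, by norm_num, by norm_num [sign], by simp [sqDist, coord]⟩
  · exact ⟨2, by norm_num, by norm_num, by norm_num [sign], by simp [sqDist, coord]⟩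
  · exact ⟨3, by norm_num, by norm_num, by norm_num [sign], by simp [sqDist, coord]⟩
  · exact ⟨1, le_rfl, by norm_num, by norm_num [sign], by simp [sqDist, coord]⟩
  · exact ⟨1, le_rfl, by norm_num, by norm_num [sign], by simp [sqDist, coord]⟩

theorem two_mul_sq_le_sqDist_of_sign_eq {m : ℝ} (hm0 : 0 ≤ m)
    (hm : ∀ k, 2 ≤ k → k ≤ 6 → m ≤ r k) {i j : ℕ} (hi1 : 1 ≤ i) (hi6 : i ≤ 6)
    (hj1 : 1 ≤ j) (hj6 : j ≤ 6) (hij : i ≠ j) (hsign : sign i * sign j = 1) :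
    2 * m ^ 2 ≤ sqDist r i j := by
  have := hm 2 le_rfl (by norm_num)
  have := hm 3 (by norm_num) (by norm_num)
  have := hm 4 (by norm_num) (by norm_num)
  have := hm 5 (by norm_num) (by norm_num)
  have := hm 6 (by norm_num) le_rfl
  revert hij hsign
  interval_cases i <;> interval_cases j <;> norm_num [sign, sqDist, coord] <;> nlinarith

end CrossConfig

open CrossConfig in
theorem cross_configuration_properties_general
    (N : ℕ)
    (v u : EuclideanSpace ℝ (Fin N))
    (hv : ‖v‖ = 1) (hu : ‖u‖ = 1) (hvu : (inner ℝ v u : ℝ) = 0)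
    (a : EuclideanSpace ℝ (Fin N))
    (r : ℕ → ℝ) (hr : ∀ m, 2 ≤ m → m ≤ 6 → 0 < r m)
    (P : ℕ → EuclideanSpace ℝ (Fin N))
    (hP1 : P 1 = a)
    (hP2 : P 2 = a + r 2 • v)
    (hP3 : P 3 = a + (r 2 + r 3) • v)
    (hP4 : P 4 = a + (r 2 + r 3 + r 4) • v)
    (hP5 : P 5 = a + r 5 • u)
    (hP6 : P 6 = a - r 6 • u)
    (τ : ℕ → ℝ)
    (hτ1 : τ 1 = -1) (hτ3 : τ 3 = -1)
    (hτ2 : τ 2 = 1) (hτ4 : τ 4 = 1) (hτ5 : τ 5 = 1) (hτ6 : τ 6 = 1) :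
    -- (1) r i is the minimum distance to previous points, attained at an
    -- opposite-sign point
    (∀ i, 2 ≤ i → i ≤ 6 →
      (∀ j, 1 ≤ j → j < i → r i ≤ ‖P i - P j‖) ∧
      (∃ j, 1 ≤ j ∧ j < i ∧ τ j = -τ i ∧ r i = ‖P i - P j‖)) ∧
    -- (2) same-sign points are at distance at least √2 times the minimal gap
    (∀ i j, 1 ≤ i → i ≤ 6 → 1 ≤ j → j ≤ 6 → i ≠ j → τ i * τ j = 1 →
      ∃ s, 2 ≤ s ∧ s ≤ 6 ∧ Real.sqrt 2 * r s ≤ ‖P i - P j‖) := by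
  have hP : ∀ i, 1 ≤ i → i ≤ 6 → P i = a + (coord r i).1 • v + (coord r i).2 • u := by
    intro i hi1 hi6
    interval_cases i <;> simp [coord, hP1, hP2, hP3, hP4, hP5, hP6, sub_eq_add_neg]
  have hdist : ∀ i j, 1 ≤ i → i ≤ 6 → 1 ≤ j → j ≤ 6 → ‖P i - P j‖ = √(sqDist r i j) :=
    fun i j hi1 hi6 hj1 hj6 => by
      rw [hP i hi1 hi6, hP j hj1 hj6, norm_sub_of_orthonormal_frame a hv hu hvu, sqDist]
  have hτ : ∀ i, 1 ≤ i → i ≤ 6 → τ i = sign i := by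
    intro i hi1 hi6
    interval_cases i <;> simp [sign, *]
  refine ⟨fun i hi2 hi6 => ⟨fun j hj1 hji => ?_, ?_⟩, fun i j hi1 hi6 hj1 hj6 hij hsign => ?_⟩
  · rw [hdist i j (by omega) hi6 hj1 (by omega)]
    exact (le_abs_self _).trans (Real.abs_le_sqrt (sq_le_sqDist hr hi2 hi6 hj1 hji))
  · obtain ⟨j, hj1, hji, hsign, hsq⟩ := exists_opposite_sign_sqDist_eq (r := r) i hi2 hi6
    refine ⟨j, hj1, hji, by rw [hτ j hj1 (by omega), hτ i (by omega) hi6, hsign], ?_⟩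
    rw [hdist i j (by omega) hi6 hj1 (by omega), hsq, Real.sqrt_sq (hr i hi2 hi6).le]
  · obtain ⟨s, hs, hmin⟩ := (Icc 2 6).exists_min_image r (nonempty_Icc.mpr (by norm_num))
    obtain ⟨hs2, hs6⟩ := mem_Icc.mp hs
    have hrs := (hr s hs2 hs6).le
    refine ⟨s, hs2, hs6, ?_⟩
    rw [hτ i hi1 hi6, hτ j hj1 hj6] at hsign
    rw [hdist i j hi1 hi6 hj1 hj6, ← Real.sqrt_sq hrs, ← Real.sqrt_mul zero_le_two]
    exact Real.sqrt_le_sqrt <| two_mul_sq_le_sqDist_of_sign_eq hrs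
      (fun k hk2 hk6 => hmin k (mem_Icc.mpr ⟨hk2, hk6⟩)) hi1 hi6 hj1 hj6 hij hsign

theorem cross_configuration_properties
    (N : ℕ) (hN : 2 ≤ N)
    (v u : EuclideanSpace ℝ (Fin N))
    (hv : ‖v‖ = 1) (hu : ‖u‖ = 1) (hvu : (inner ℝ v u : ℝ) = 0)
    (a : EuclideanSpace ℝ (Fin N))
    (r : ℕ → ℝ) (hr : ∀ m, 2 ≤ m → m ≤ 6 → 0 < r m)
    (P : ℕ → EuclideanSpace ℝ (Fin N))
    (hP1 : P 1 = a)
    (hP2 : P 2 = a + r 2 • v)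
    (hP3 : P 3 = a + (r 2 + r 3) • v)
    (hP4 : P 4 = a + (r 2 + r 3 + r 4) • v)
    (hP5 : P 5 = a + r 5 • u)
    (hP6 : P 6 = a - r 6 • u)
    (τ : ℕ → ℝ)
    (hτ1 : τ 1 = -1) (hτ3 : τ 3 = -1)
    (hτ2 : τ 2 = 1) (hτ4 : τ 4 = 1) (hτ5 : τ 5 = 1) (hτ6 : τ 6 = 1) :
    -- (1) r i is the minimum distance to previous points, attained at an
    -- opposite-sign point
    (∀ i, 2 ≤ i → i ≤ 6 →
      (∀ j, 1 ≤ j → j < i → r i ≤ ‖P i - P j‖) ∧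
      (∃ j, 1 ≤ j ∧ j < i ∧ τ j = -τ i ∧ r i = ‖P i - P j‖)) ∧
    -- (2) same-sign points are at distance at least √2 times the minimal gap
    (∀ i j, 1 ≤ i → i ≤ 6 → 1 ≤ j → j ≤ 6 → i ≠ j → τ i * τ j = 1 →
      ∃ s, 2 ≤ s ∧ s ≤ 6 ∧ Real.sqrt 2 * r s ≤ ‖P i - P j‖) :=
  cross_configuration_properties_general N v u hv hu hvu a r hr P hP1 hP2 hP3 hP4 hP5 hP6 τ hτ1 hτ3
    hτ2 hτ4 hτ5 hτ6
end

section
/- Let β ∈ (0, 1), let c ≥ c' > 0 be constants, let (ε_k) be a sequence in (0, 1) with ε_k → 0, and let (ρ_k) be nonnegative reals with c'·ε_k^{2β} ≤ W(ρ_k) ≤ c·ε_k^{2β} for all k. Then ρ_k/(2β·log(1/ε_k)) → 1 as k → ∞. -/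
/-!
Since `W > 0` is continuous, `W (ρ k) → 0` forces `ρ k → ∞`. Taking logarithms in
`r ^ p * exp r * W r → A` with `p = (N - 1) / 2` and in `c' ε k ^ (2 β) ≤ W (ρ k) ≤ c ε k ^ (2 β)`
gives `ρ k + p log ρ k = 2 β log (1 / ε k) + O(1)`; as `log ρ = o(ρ)`, this says
`ρ k ~ 2 β log (1 / ε k)`.
-/

open Filter Set Real Asymptotics Topology

theorem ContinuousOn.tendsto_atTop_of_comp_tendsto_zero {α : Type*} {l : Filter α} {f : ℝ → ℝ}
    (hf : ContinuousOn f (Ici 0)) (hf_pos : ∀ r ∈ Ici (0 : ℝ), 0 < f r) {x : α → ℝ}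
    (hx : ∀ᶠ k in l, 0 ≤ x k) (hfx : Tendsto (fun k => f (x k)) l (𝓝 0)) :
    Tendsto x l atTop := by
  refine (atTop_basis' 0).tendsto_right_iff.2 fun b hb => ?_
  obtain ⟨r, hr, hr_min⟩ := isCompact_Icc.exists_isMinOn (nonempty_Icc.2 hb)
    (hf.mono Icc_subset_Ici_self)
  filter_upwards [hx, hfx.eventually_lt_const (hf_pos r hr.1)] with k hk_nonneg hk_lt
  by_contra hk
  exact hk_lt.not_ge (hr_min ⟨hk_nonneg, (not_le.1 hk).le⟩)

theorem tendsto_add_add_log_of_tendsto_rpow_mul_exp_mul {W : ℝ → ℝ} {p A : ℝ} (hA : 0 < A)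
    (hW : Tendsto (fun r => r ^ p * exp r * W r) atTop (𝓝 A)) :
    Tendsto (fun r => p * log r + r + log (W r)) atTop (𝓝 (log A)) := by
  refine ((continuousAt_log hA.ne').tendsto.comp hW).congr' ?_
  filter_upwards [hW.eventually_ne hA.ne', eventually_gt_atTop 0] with r hr_ne hr_pos
  rw [Function.comp_apply, log_mul (left_ne_zero_of_mul hr_ne) (right_ne_zero_of_mul hr_ne),
    log_mul (rpow_pos_of_pos hr_pos p).ne' (exp_pos r).ne', log_rpow hr_pos, log_exp]

theorem abs_log_sub_mul_log_le {w e γ c c' : ℝ} (hc' : 0 < c') (he : 0 < e)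
    (hlow : c' * e ^ γ ≤ w) (hhigh : w ≤ c * e ^ γ) :
    |log w - γ * log e| ≤ |log c'| + |log c| := by
  have heγ : 0 < e ^ γ := rpow_pos_of_pos he γ
  have hw : 0 < w := (mul_pos hc' heγ).trans_le hlow
  have hc : 0 < c := pos_of_mul_pos_left (hw.trans_le hhigh) heγ.le
  have hlog_low := log_le_log (mul_pos hc' heγ) hlow
  have hlog_high := log_le_log hw hhigh
  rw [log_mul hc'.ne' heγ.ne', log_rpow he] at hlog_low
  rw [log_mul hc.ne' heγ.ne', log_rpow he] at hlog_high
  rw [abs_le]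
  constructor <;>
    linarith [neg_abs_le (log c'), le_abs_self (log c), abs_nonneg (log c'), abs_nonneg (log c)]

theorem tendsto_div_of_sub_add_mul_log_isBigO_one {α : Type*} {l : Filter α} {ρ L : α → ℝ}
    (p : ℝ) (hρ : Tendsto ρ l atTop)
    (hL : (fun k => L k - (ρ k + p * log (ρ k))) =O[l] fun _ => (1 : ℝ)) :
    Tendsto (fun k => ρ k / L k) l (𝓝 1) := by
  have hone : (fun _ => (1 : ℝ)) =o[l] ρ :=
    (isLittleO_one_left_iff ℝ).2 (tendsto_norm_atTop_atTop.comp hρ)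
  have hlog : (fun k => log (ρ k)) =o[l] ρ := isLittleO_log_id_atTop.comp_tendsto hρ
  have hequiv : L ~[l] ρ := by
    refine ((hL.trans_isLittleO hone).add (hlog.const_mul_left p)).congr_left fun k => ?_
    simp only [Pi.sub_apply]
    ring
  exact (isEquivalent_iff_tendsto_one ((hequiv.symm.tendsto_atTop hρ).eventually_ne_atTop 0)).1
    hequiv.symm

theorem distance_asymptotics_general
    (N : ℕ)
    (W : ℝ → ℝ) (hW_cont : ContinuousOn W (Ici 0))
    (hW_pos : ∀ r ∈ Ici (0 : ℝ), 0 < W r)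
    (A : ℝ) (hA : 0 < A)
    (hW_asym : Tendsto (fun r => r ^ (((N : ℝ) - 1) / 2) * Real.exp r * W r)
      atTop (nhds A))
    (β : ℝ) (hβ : β ∈ Ioo (0 : ℝ) 1)
    (c c' : ℝ) (hc' : 0 < c')
    (ε : ℕ → ℝ) (hε : ∀ k, ε k ∈ Ioo (0 : ℝ) 1)
    (hε0 : Tendsto ε atTop (nhds 0))
    (ρ : ℕ → ℝ) (hρ : ∀ k, 0 ≤ ρ k)
    (hlow : ∀ k, c' * ε k ^ (2 * β) ≤ W (ρ k))
    (hhigh : ∀ k, W (ρ k) ≤ c * ε k ^ (2 * β)) :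
    Tendsto (fun k => ρ k / (2 * β * Real.log (1 / ε k))) atTop (nhds 1) := by
  have h2β : 0 < 2 * β := by linarith [hβ.1]
  have hεβ : Tendsto (fun k => ε k ^ (2 * β)) atTop (𝓝 0) := by
    have := (continuousAt_rpow_const 0 (2 * β) (Or.inr h2β.le)).tendsto.comp hε0
    rwa [zero_rpow h2β.ne'] at this
  have hρ_top : Tendsto ρ atTop atTop :=
    hW_cont.tendsto_atTop_of_comp_tendsto_zero hW_pos (.of_forall hρ) <|
      squeeze_zero (fun k => (hW_pos _ (hρ k)).le) hhigh (by simpa using hεβ.const_mul c)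
  have hF := (tendsto_add_add_log_of_tendsto_rpow_mul_exp_mul hA hW_asym).comp hρ_top
  have hu : (fun k => log (W (ρ k)) - 2 * β * log (ε k)) =O[atTop] fun _ => (1 : ℝ) :=
    .of_bound (|log c'| + |log c|) <| .of_forall fun k => by
      simpa using abs_log_sub_mul_log_le hc' (hε k).1 (hlow k) (hhigh k)
  refine tendsto_div_of_sub_add_mul_log_isBigO_one (((N : ℝ) - 1) / 2) hρ_top ?_
  refine (hu.sub (hF.isBigO_one ℝ)).congr_left fun k => ?_
  simp only [Function.comp_apply, one_div, log_inv]
  ring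

theorem distance_asymptotics
    (N : ℕ) (hN : 2 ≤ N)
    (W : ℝ → ℝ) (hW_cont : ContinuousOn W (Ici 0))
    (hW_pos : ∀ r ∈ Ici (0 : ℝ), 0 < W r)
    (A : ℝ) (hA : 0 < A)
    (hW_asym : Tendsto (fun r => r ^ (((N : ℝ) - 1) / 2) * Real.exp r * W r)
      atTop (nhds A))
    (β : ℝ) (hβ : β ∈ Ioo (0 : ℝ) 1)
    (c c' : ℝ) (hc' : 0 < c') (hcc : c' ≤ c)
    (ε : ℕ → ℝ) (hε : ∀ k, ε k ∈ Ioo (0 : ℝ) 1)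
    (hε0 : Tendsto ε atTop (nhds 0))
    (ρ : ℕ → ℝ) (hρ : ∀ k, 0 ≤ ρ k)
    (hlow : ∀ k, c' * ε k ^ (2 * β) ≤ W (ρ k))
    (hhigh : ∀ k, W (ρ k) ≤ c * ε k ^ (2 * β)) :
    Tendsto (fun k => ρ k / (2 * β * Real.log (1 / ε k))) atTop (nhds 1) :=
  distance_asymptotics_general N W hW_cont hW_pos A hA hW_asym β hβ c c' hc' ε hε hε0 ρ hρ hlow
    hhigh
end
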